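/- arXiv:1202.3311 — 2 statements merged into one kernel-verified Lean document; each statement's English description precedes it below -/
import Mathlib

section
/- Let q ≥ 2 be an integer, let 𝒯 = {X_1 → expr_1, …, X_n → expr_n} be an SLP representing string T, and let P be any string of length q. Then |Occ(T,P)| = Σ_{i : X_i has a nonterminal rule} vOcc(X_i) · |Occ(t_i, P)|. -/
/-- A straight line program over alphabet `α`: variables are `Fin n` (variable
`X_i` of the paper corresponds to index `i-1`), each with either a terminal
rule (a single character) or a nonterminal rule `X_i → X_j X_k` with `j,k < i`. -/
structure SLP (α : Type) where
  n : ℕ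
  npos : 0 < n
  rule : Fin n → α ⊕ (Fin n × Fin n)
  wf : ∀ i jk, rule i = Sum.inr jk → jk.1 < i ∧ jk.2 < i

namespace SLP

variable {α : Type}

/-- the string `val(X_i)` derived by a variable -/
def val (S : SLP α) (i : Fin S.n) : List α :=
  match h : S.rule i with
  | Sum.inl a => [a]
  | Sum.inr jk =>
    have _h1 := (S.wf i jk h).1
    have _h2 := (S.wf i jk h).2
    S.val jk.1 ++ S.val jk.2
termination_by i.val

/-- the last variable `X_n` -/
def lastIdx (S : SLP α) : Fin S.n := ⟨S.n - 1, Nat.sub_lt S.npos Nat.one_pos⟩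

/-- the string `T` represented by the SLP -/
def text (S : SLP α) : List α := S.val S.lastIdx

/-- `T([i:j])`: the (1-based, inclusive) substring of a string -/
def substr (T : List α) (i j : ℕ) : List α := (T.drop (i - 1)).take (j + 1 - i)

/-- `pre(T,q)` -/
def spre (T : List α) (q : ℕ) : List α := T.take q

/-- `suf(T,q)` -/
def ssuf (T : List α) (q : ℕ) : List α := T.drop (T.length - q)

/-- `pre([b:e],q)` for intervals of positions -/
def ipre (b e q : ℕ) : Finset ℕ := Finset.Icc b (min (b + q - 1) e)

/-- `suf([b:e],q)` for intervals of positions -/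
def isuf (b e q : ℕ) : Finset ℕ := Finset.Icc (max b (e + 1 - q)) e

/-- `Occ(T,P)`: the set of (1-based) occurrences of `P` in `T` -/
def Occ [DecidableEq α] (T P : List α) : Finset ℕ :=
  (Finset.Icc 1 T.length).filter fun k => substr T k (k + P.length - 1) = P

/-- the multiset of labels of the nodes of the derivation tree rooted at
a node labeled `X_i` -/
def occsFrom (S : SLP α) (i : Fin S.n) : Multiset (Fin S.n) :=
  match h : S.rule i with
  | Sum.inl _ => {i}
  | Sum.inr jk =>
    have _h1 := (S.wf i jk h).1
    have _h2 := (S.wf i jk h).2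
    i ::ₘ (S.occsFrom jk.1 + S.occsFrom jk.2)
termination_by i.val

/-- `vOcc(X_i)`: the number of nodes of the derivation tree labeled `X_i` -/
def vOcc (S : SLP α) (i : Fin S.n) : ℕ := (S.occsFrom S.lastIdx).count i

/-- the string `t_i = suf(val(X_{ℓ(i)}),q-1) pre(val(X_{r(i)}),q-1)`
(and `[]` for a terminal rule) -/
def tstr (S : SLP α) (q : ℕ) (i : Fin S.n) : List α :=
  match S.rule i with
  | Sum.inl _ => []
  | Sum.inr jk => ssuf (S.val jk.1) (q - 1) ++ spre (S.val jk.2) (q - 1)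

/-- `label(X_i) = t_i([q:|t_i|])` -/
def labelStr (S : SLP α) (q : ℕ) (i : Fin S.n) : List α := (S.tstr q i).drop (q - 1)

/-- Nodes of the derivation tree are represented by the path from the root
(`false` = go to left child, `true` = go to right child).  `descend i p`
returns the label of the node reached from a node labeled `X_i` by path `p`. -/
def descend (S : SLP α) : Fin S.n → List Bool → Option (Fin S.n)
  | i, [] => some i
  | i, b :: p =>
    match S.rule i with
    | Sum.inl _ => none
    | Sum.inr jk => S.descend (if b then jk.2 else jk.1) p

/-- the label of the node of the derivation tree reached by path `p` from the root -/
def nodeVar (S : SLP α) (p : List Bool) : Option (Fin S.n) := S.descend S.lastIdx p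

/-- `p` is a valid node of the derivation tree -/
def IsNode (S : SLP α) (p : List Bool) : Prop := (S.nodeVar p).isSome

/-- the 0-based offset in `val(X_i)` of the part derived below path `p` -/
def offsetFrom (S : SLP α) : Fin S.n → List Bool → ℕ
  | _, [] => 0
  | i, b :: p =>
    match S.rule i with
    | Sum.inl _ => 0
    | Sum.inr jk =>
      if b then (S.val jk.1).length + S.offsetFrom jk.2 p
      else S.offsetFrom jk.1 p

/-- the 0-based offset in `T` of the interval derived by node `p` -/
def offset (S : SLP α) (p : List Bool) : ℕ := S.offsetFrom S.lastIdx p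

/-- `itv(v)`: the (1-based) interval of positions of `T` derived by node `p` -/
def itv (S : SLP α) (p : List Bool) : Finset ℕ :=
  match S.nodeVar p with
  | some i => Finset.Icc (S.offset p + 1) (S.offset p + (S.val i).length)
  | none => ∅

/-- `p = ξ(b,e)`: `p` is the deepest node whose interval contains `[b:e]`,
i.e. `itv(p) ⊇ [b:e]` and no proper descendant of `p` satisfies this. -/
def Stabs (S : SLP α) (p : List Bool) (b e : ℕ) : Prop :=
  S.IsNode p ∧ Finset.Icc b e ⊆ S.itv p ∧
  ∀ p' : List Bool, p <+: p' → p ≠ p' → S.IsNode p' → ¬ Finset.Icc b e ⊆ S.itv p'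

/-- `X_j` is a right `q`-gram neighbor of `X_i` -/
def RightNbr (S : SLP α) (q : ℕ) (i j : Fin S.n) : Prop :=
  i ≠ j ∧ ∃ u p p', 1 ≤ u ∧ u + q ≤ S.text.length ∧
    S.Stabs p u (u + q - 1) ∧ S.nodeVar p = some i ∧
    S.Stabs p' (u + 1) (u + q) ∧ S.nodeVar p' = some j

/-- `lm_q(X_i)`: the last variable of length `≥ q` on the sequence `i, ℓ(i), ℓ(ℓ(i)), …`
(meaningful when `|val(X_i)| ≥ q`) -/
def lm (S : SLP α) (q : ℕ) (i : Fin S.n) : Fin S.n :=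
  match h : S.rule i with
  | Sum.inl _ => i
  | Sum.inr jk =>
    have := (S.wf i jk h).1
    if (S.val jk.1).length < q then i else S.lm q jk.1
termination_by i.val

/-- `rm_q(X_i)`: the last variable of length `≥ q` on the sequence `i, r(i), r(r(i)), …` -/
def rm (S : SLP α) (q : ℕ) (i : Fin S.n) : Fin S.n :=
  match h : S.rule i with
  | Sum.inl _ => i
  | Sum.inr jk =>
    have := (S.wf i jk h).2
    if (S.val jk.2).length < q then i else S.rm q jk.2
termination_by i.val

/-- `lm_q` returning `null` (`none`) when `|val(X_i)| < q` -/
def lmOpt (S : SLP α) (q : ℕ) (i : Fin S.n) : Option (Fin S.n) :=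
  if (S.val i).length < q then none else some (S.lm q i)

/-- `rm_q` returning `null` (`none`) when `|val(X_i)| < q` -/
def rmOpt (S : SLP α) (q : ℕ) (i : Fin S.n) : Option (Fin S.n) :=
  if (S.val i).length < q then none else some (S.rm q i)

/-- `LSpine S i k`: `k` occurs in the sequence `i, ℓ(i), ℓ(ℓ(i)), …`
(the leftmost path of the derivation subtree rooted at a node labeled `X_i`) -/
inductive LSpine (S : SLP α) : Fin S.n → Fin S.n → Prop
  | refl (i : Fin S.n) : LSpine S i i
  | step {i k : Fin S.n} {jk : Fin S.n × Fin S.n} :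
      S.rule i = Sum.inr jk → LSpine S jk.1 k → LSpine S i k

end SLP

/-
Split `val(X_i) = val(X_ℓ(i)) val(X_r(i))`: an occurrence of `P` lies in the left part, in the
right part, or straddles the boundary, and since `|P| = q` a straddling occurrence sits inside
the `q - 1` characters on either side of it, i.e. it is an occurrence in `t_i`. Unfolding this
recursion over the whole derivation tree, every node labeled `X_i` contributes `|Occ(t_i, P)|`,
while the leaves (single characters) contain no occurrence of a pattern of length `q ≥ 2`.
-/

theorem Multiset.sum_map_eq_sum_count_nsmul {ι M : Type*} [Fintype ι] [DecidableEq ι]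
    [AddCommMonoid M] (s : Multiset ι) (f : ι → M) :
    (s.map f).sum = ∑ i, s.count i • f i := by
  rw [Finset.sum_multiset_map_count]
  refine Finset.sum_subset (Finset.subset_univ _) fun i _ hi => ?_
  rw [Multiset.count_eq_zero_of_notMem (by simpa using hi), zero_smul]

namespace SLP

section Unfold

variable {α : Type} {S : SLP α} {i : Fin S.n}

theorem val_of_rule_inl {a : α} (h : S.rule i = .inl a) : S.val i = [a] := by
  rw [val]; split <;> simp_all

theorem val_of_rule_inr {jk : Fin S.n × Fin S.n} (h : S.rule i = .inr jk) :
    S.val i = S.val jk.1 ++ S.val jk.2 := by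
  rw [val]; split <;> simp_all

theorem occsFrom_of_rule_inl {a : α} (h : S.rule i = .inl a) : S.occsFrom i = {i} := by
  rw [occsFrom]; split <;> simp_all

theorem occsFrom_of_rule_inr {jk : Fin S.n × Fin S.n} (h : S.rule i = .inr jk) :
    S.occsFrom i = i ::ₘ (S.occsFrom jk.1 + S.occsFrom jk.2) := by
  rw [occsFrom]; split <;> simp_all

theorem tstr_of_rule_inl {q : ℕ} {a : α} (h : S.rule i = .inl a) : S.tstr q i = [] := by
  simp [tstr, h]

theorem tstr_of_rule_inr {q : ℕ} {jk : Fin S.n × Fin S.n} (h : S.rule i = .inr jk) :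
    S.tstr q i = ssuf (S.val jk.1) (q - 1) ++ spre (S.val jk.2) (q - 1) := by
  simp [tstr, h]

end Unfold

variable {α : Type} [DecidableEq α]

theorem Occ_nil (P : List α) : Occ [] P = ∅ := by
  simp [Occ]

theorem mem_Occ {T P : List α} (hP : P ≠ []) {k : ℕ} :
    k ∈ Occ T P ↔ 1 ≤ k ∧ P <+: T.drop (k - 1) := by
  rw [Occ, Finset.mem_filter, Finset.mem_Icc, substr]
  constructor
  · rintro ⟨⟨hk, -⟩, h⟩
    refine ⟨hk, List.prefix_iff_eq_take.2 ?_⟩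
    rwa [show k + P.length - 1 + 1 - k = P.length by omega, eq_comm] at h
  · rintro ⟨hk, h⟩
    have hlen := h.length_le
    have := List.length_pos_of_ne_nil hP
    rw [List.length_drop] at hlen
    refine ⟨⟨hk, by omega⟩, ?_⟩
    rw [show k + P.length - 1 + 1 - k = P.length by omega]
    exact (List.prefix_iff_eq_take.1 h).symm

theorem add_length_le_of_mem_Occ {T P : List α} (hP : P ≠ []) {k : ℕ} (hk : k ∈ Occ T P) :
    k + P.length ≤ T.length + 1 := by
  obtain ⟨hk1, h⟩ := (mem_Occ hP).1 hk
  have := h.length_le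
  rw [List.length_drop] at this
  have := List.length_pos_of_ne_nil hP
  omega

/-- The filter keeps the occurrences lying within positions `d + 1, …, d + w` of `T`. -/
theorem card_filter_Occ_window {T P : List α} (hP : P ≠ []) (d w : ℕ) :
    ((Occ T P).filter fun k => d < k ∧ k + P.length ≤ d + w + 1).card =
      (Occ ((T.drop d).take w) P).card := by
  have hP1 := List.length_pos_of_ne_nil hP
  refine Finset.card_nbij' (· - d) (· + d) ?_ ?_ ?_ ?_
  · intro k hk
    simp only [Finset.coe_filter, Set.mem_ofPred_eq, mem_Occ hP] at hk
    obtain ⟨⟨-, hpre⟩, hdk, hkw⟩ := hk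
    simp only [Finset.mem_coe, mem_Occ hP, List.drop_take, List.drop_drop, List.prefix_take_iff]
    refine ⟨by omega, ?_, by omega⟩
    rwa [show d + (k - d - 1) = k - 1 by omega]
  · intro m hm
    simp only [Finset.mem_coe, mem_Occ hP, List.drop_take, List.drop_drop,
      List.prefix_take_iff] at hm
    obtain ⟨hm1, hpre, hlen⟩ := hm
    simp only [Finset.coe_filter, Set.mem_ofPred_eq, mem_Occ hP]
    refine ⟨⟨by omega, ?_⟩, by omega, by omega⟩
    rwa [show m + d - 1 = d + (m - 1) by omega]
  · intro k hk
    simp only [Finset.coe_filter, Set.mem_ofPred_eq] at hk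
    simp only
    omega
  · intro m hm
    simp only
    omega

theorem card_Occ_append {A B P : List α} (hP : P ≠ []) :
    (Occ (A ++ B) P).card =
      (Occ A P).card + (Occ (ssuf A (P.length - 1) ++ spre B (P.length - 1)) P).card +
        (Occ B P).card := by
  have hP1 := List.length_pos_of_ne_nil hP
  set s := Occ (A ++ B) P
  set c := P.length - 1 with hc
  have hleft : (s.filter fun k => k ≤ A.length ∧ k + P.length ≤ A.length + 1).card =
      (Occ A P).card := by
    have h := card_filter_Occ_window (T := A ++ B) hP 0 A.length
    rw [List.drop_zero, List.take_left] at h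
    rw [← h]
    congr 1
    refine Finset.filter_congr fun k hk => ?_
    have := ((mem_Occ hP).1 hk).1
    omega
  have hcross : (s.filter fun k => k ≤ A.length ∧ ¬ k + P.length ≤ A.length + 1).card =
      (Occ (ssuf A c ++ spre B c) P).card := by
    set d := A.length - c
    have hd : (A.drop d).length = A.length - d := List.length_drop
    have h := card_filter_Occ_window (T := A ++ B) hP d ((A.drop d).length + c)
    rw [List.drop_append_of_le_length (by omega), List.take_length_add_append] at h
    rw [ssuf, spre, ← h]
    congr 1
    refine Finset.filter_congr fun k hk => ?_
    have := ((mem_Occ hP).1 hk).1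
    omega
  have hright : (s.filter fun k => ¬ k ≤ A.length).card = (Occ B P).card := by
    have h := card_filter_Occ_window (T := A ++ B) hP A.length B.length
    rw [List.drop_left, List.take_length] at h
    rw [← h]
    congr 1
    refine Finset.filter_congr fun k hk => ?_
    have := add_length_le_of_mem_Occ hP hk
    rw [List.length_append] at this
    omega
  rw [← hleft, ← hcross, ← hright, ← Finset.filter_filter, ← Finset.filter_filter,
    Finset.card_filter_add_card_filter_not, Finset.card_filter_add_card_filter_not]

theorem Occ_singleton_eq_empty {a : α} {P : List α} (hP : 2 ≤ P.length) : Occ [a] P = ∅ := by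
  have hP0 : P ≠ [] := List.ne_nil_of_length_pos (by omega)
  refine Finset.eq_empty_of_forall_notMem fun k hk => ?_
  have hlen := add_length_le_of_mem_Occ hP0 hk
  have hk1 := ((mem_Occ hP0).1 hk).1
  rw [List.length_singleton] at hlen
  omega

variable {S : SLP α}

theorem card_Occ_val_eq_sum_occsFrom {P : List α} (hP : 2 ≤ P.length) (i : Fin S.n) :
    (Occ (S.val i) P).card =
      ((S.occsFrom i).map fun j => (Occ (S.tstr P.length j) P).card).sum := by
  match h : S.rule i with
  | .inl a =>
    simp [val_of_rule_inl h, occsFrom_of_rule_inl h, tstr_of_rule_inl h, Occ_nil,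
      Occ_singleton_eq_empty hP]
  | .inr jk =>
    have := S.wf i jk h
    rw [val_of_rule_inr h, occsFrom_of_rule_inr h,
      card_Occ_append (List.ne_nil_of_length_pos (by omega)),
      card_Occ_val_eq_sum_occsFrom hP jk.1, card_Occ_val_eq_sum_occsFrom hP jk.2]
    simp only [Multiset.map_cons, Multiset.map_add, Multiset.sum_cons, Multiset.sum_add,
      tstr_of_rule_inr h]
    omega
termination_by i.val

end SLP

/-- Lemma 2 of the paper: for an SLP `𝒯` representing `T`,
`q ≥ 2` and any `q`-gram `P`,
`|Occ(T,P)| = Σ_{i nonterminal} vOcc(X_i) · |Occ(t_i,P)|`. -/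
theorem stmt0 {α : Type} [DecidableEq α] (q : ℕ) (hq : 2 ≤ q) (S : SLP α)
    (P : List α) (hP : P.length = q) :
    (SLP.Occ S.text P).card =
      ∑ i ∈ Finset.univ.filter (fun i : Fin S.n => (S.rule i).isRight = true),
        S.vOcc i * (SLP.Occ (S.tstr q i) P).card := by
  subst hP
  rw [SLP.text, SLP.card_Occ_val_eq_sum_occsFrom hq, Multiset.sum_map_eq_sum_count_nsmul]
  simp only [smul_eq_mul, SLP.vOcc]
  refine (Finset.sum_filter_of_ne fun i _ hi => ?_).symm
  cases h : S.rule i with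
  | inl _ => simp [SLP.tstr_of_rule_inl h, SLP.Occ_nil] at hi
  | inr _ => rfl
end

section
/- Let q ≥ 2, let 𝒯 be an SLP representing T, let v be a node of the derivation tree labeled by a variable with a nonterminal rule, and let [s_v:f_v] = suf(itv(ℓ(v)), q-1) ∪ pre(itv(r(v)), q-1) (this union of two adjacent intervals is an interval). Then for any position u with 1 ≤ u and u + q - 1 ≤ |T|, the node ξ(u, u+q-1) equals v if and only if [u : u+q-1] ⊆ [s_v : f_v]. -/
namespace SLP

variable {α : Type} (S : SLP α)

theorem val_of_rule_eq_inr {i : Fin S.n} {jk : Fin S.n × Fin S.n}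
    (h : S.rule i = Sum.inr jk) : S.val i = S.val jk.1 ++ S.val jk.2 := by
  rw [val]
  split
  next a ha => rw [ha] at h; cases h
  next jk' h' => rw [h'] at h; cases h; rfl

theorem descend_append (p₁ p₂ : List Bool) (i : Fin S.n) :
    S.descend i (p₁ ++ p₂) = (S.descend i p₁).bind (S.descend · p₂) := by
  induction p₁ generalizing i with
  | nil => rfl
  | cons b p ih =>
    simp only [List.cons_append, descend]
    split
    · rfl
    · exact ih _

theorem offsetFrom_append (p₁ p₂ : List Bool) {i j : Fin S.n} (h : S.descend i p₁ = some j) :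
    S.offsetFrom i (p₁ ++ p₂) = S.offsetFrom i p₁ + S.offsetFrom j p₂ := by
  induction p₁ generalizing i with
  | nil => cases h; simp [offsetFrom]
  | cons b p ih =>
    simp only [descend] at h
    simp only [List.cons_append, offsetFrom]
    split at h
    · cases h
    · cases b
      · simpa using ih h
      · simp only [if_true] at h ⊢
        rw [ih h, Nat.add_assoc]

theorem offsetFrom_add_length_le (p : List Bool) {i j : Fin S.n} (h : S.descend i p = some j) :
    S.offsetFrom i p + (S.val j).length ≤ (S.val i).length := by
  induction p generalizing i with
  | nil => cases h; simp [offsetFrom]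
  | cons b p ih =>
    simp only [descend] at h
    simp only [offsetFrom]
    split at h
    · cases h
    next jk hr =>
      rw [S.val_of_rule_eq_inr hr, List.length_append]
      have := ih h
      cases b <;> simp only [Bool.false_eq_true, if_true, if_false] at this ⊢ <;> omega

theorem itv_of_nodeVar {p : List Bool} {i : Fin S.n} (h : S.nodeVar p = some i) :
    S.itv p = Finset.Icc (S.offset p + 1) (S.offset p + (S.val i).length) := by
  simp [itv, h]

theorem itv_append_subset (p t : List Bool) : S.itv (p ++ t) ⊆ S.itv p := by
  cases hpt : S.nodeVar (p ++ t) with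
  | none => simp [itv, hpt]
  | some m =>
    have hpt' : S.descend S.lastIdx (p ++ t) = some m := hpt
    rw [descend_append] at hpt'
    obtain ⟨i, hp, hm⟩ := Option.bind_eq_some_iff.mp hpt'
    have hoff : S.offset (p ++ t) = S.offset p + S.offsetFrom i t :=
      S.offsetFrom_append p t hp
    have hle := S.offsetFrom_add_length_le t hm
    rw [S.itv_of_nodeVar hpt, S.itv_of_nodeVar hp, hoff]
    exact Finset.Icc_subset_Icc (by omega) (by omega)

section Children

variable {S} {p : List Bool} {i : Fin S.n} {jk : Fin S.n × Fin S.n}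

theorem nodeVar_append_singleton (hp : S.nodeVar p = some i) (hr : S.rule i = Sum.inr jk)
    (b : Bool) : S.nodeVar (p ++ [b]) = some (if b then jk.2 else jk.1) := by
  have hp' : S.descend S.lastIdx p = some i := hp
  change S.descend S.lastIdx (p ++ [b]) = _
  rw [descend_append, hp']
  simp [descend, hr]

theorem offset_append_singleton (hp : S.nodeVar p = some i) (hr : S.rule i = Sum.inr jk)
    (b : Bool) :
    S.offset (p ++ [b]) = S.offset p + if b then (S.val jk.1).length else 0 := by
  unfold offset
  rw [S.offsetFrom_append p [b] hp]
  cases b <;> simp [offsetFrom, hr]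

theorem itv_left_child (hp : S.nodeVar p = some i) (hr : S.rule i = Sum.inr jk) :
    S.itv (p ++ [false]) =
      Finset.Icc (S.offset p + 1) (S.offset p + (S.val jk.1).length) := by
  rw [S.itv_of_nodeVar (nodeVar_append_singleton hp hr false),
    offset_append_singleton hp hr false]
  simp

theorem itv_right_child (hp : S.nodeVar p = some i) (hr : S.rule i = Sum.inr jk) :
    S.itv (p ++ [true]) = Finset.Icc (S.offset p + (S.val jk.1).length + 1)
      (S.offset p + (S.val jk.1).length + (S.val jk.2).length) := by
  rw [S.itv_of_nodeVar (nodeVar_append_singleton hp hr true),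
    offset_append_singleton hp hr true]
  simp [Nat.add_assoc]

theorem stabs_iff_not_subset_children (hp : S.nodeVar p = some i)
    (hr : S.rule i = Sum.inr jk) (b e : ℕ) :
    S.Stabs p b e ↔ Finset.Icc b e ⊆ S.itv p ∧
      ¬ Finset.Icc b e ⊆ S.itv (p ++ [false]) ∧ ¬ Finset.Icc b e ⊆ S.itv (p ++ [true]) := by
  have hchild (c : Bool) : S.IsNode (p ++ [c]) := by
    simp [IsNode, nodeVar_append_singleton hp hr c]
  constructor
  · rintro ⟨-, hsub, hdeepest⟩
    exact ⟨hsub, hdeepest _ (List.prefix_append _ _) (by simp) (hchild false),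
      hdeepest _ (List.prefix_append _ _) (by simp) (hchild true)⟩
  · rintro ⟨hsub, hleft, hright⟩
    refine ⟨by simp [IsNode, hp], hsub, ?_⟩
    rintro _ ⟨t, rfl⟩ hne - hsub'
    cases t with
    | nil => simp at hne
    | cons c t =>
      have hbelow := S.itv_append_subset (p ++ [c]) t
      rw [List.append_assoc, List.singleton_append] at hbelow
      cases c
      · exact hleft (hsub'.trans hbelow)
      · exact hright (hsub'.trans hbelow)

theorem stabs_iff_mem_itv_children (hp : S.nodeVar p = some i)
    (hr : S.rule i = Sum.inr jk) {b e : ℕ} (hbe : b ≤ e) :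
    S.Stabs p b e ↔ b ∈ S.itv (p ++ [false]) ∧ e ∈ S.itv (p ++ [true]) := by
  rw [stabs_iff_not_subset_children hp hr, S.itv_of_nodeVar hp, itv_left_child hp hr,
    itv_right_child hp hr, S.val_of_rule_eq_inr hr, List.length_append]
  simp only [Finset.Icc_subset_Icc_iff hbe, Finset.mem_Icc]
  omega

end Children

theorem Icc_subset_isuf_union_ipre_iff (a m z b k : ℕ) :
    Finset.Icc b (b + k) ⊆ isuf a m k ∪ ipre (m + 1) z k ↔
      b ∈ Finset.Icc a m ∧ b + k ∈ Finset.Icc (m + 1) z := by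
  simp only [isuf, ipre, Finset.mem_Icc]
  constructor
  · intro h
    have hb := h (Finset.mem_Icc.mpr ⟨le_rfl, Nat.le_add_right b k⟩)
    have he := h (Finset.mem_Icc.mpr ⟨Nat.le_add_right b k, le_rfl⟩)
    simp only [Finset.mem_union, Finset.mem_Icc] at hb he
    omega
  · intro hbe x hx
    simp only [Finset.mem_union, Finset.mem_Icc] at hx ⊢
    omega

end SLP

theorem stmt1_general {α : Type} (q : ℕ) (hq : 2 ≤ q) (S : SLP α)
    (p : List Bool) (i : Fin S.n) (jk : Fin S.n × Fin S.n)
    (hp : S.nodeVar p = some i) (hr : S.rule i = Sum.inr jk)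
    (s f : ℕ)
    (hsf : Finset.Icc s f =
      SLP.isuf (S.offset p + 1) (S.offset p + (S.val jk.1).length) (q - 1) ∪
      SLP.ipre (S.offset p + (S.val jk.1).length + 1)
        (S.offset p + (S.val i).length) (q - 1))
    (u : ℕ) :
    S.Stabs p u (u + q - 1) ↔ Finset.Icc u (u + q - 1) ⊆ Finset.Icc s f := by
  have hqu : u + q - 1 = u + (q - 1) := by omega
  rw [SLP.stabs_iff_mem_itv_children hp hr (by omega), hsf, hqu,
    SLP.Icc_subset_isuf_union_ipre_iff, SLP.itv_left_child hp hr, SLP.itv_right_child hp hr,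
    S.val_of_rule_eq_inr hr, List.length_append]
  simp only [Nat.add_assoc]

/-- for a node `p` of the derivation tree labeled by a variable
`X_i` with a nonterminal rule, and `[s:f] = suf(itv(ℓ(v)),q-1) ∪ pre(itv(r(v)),q-1)`,
a position `u` (with `[u:u+q-1]` inside `T`) satisfies `ξ(u,u+q-1) = v` iff
`[u:u+q-1] ⊆ [s:f]`. -/
theorem stmt1 {α : Type} (q : ℕ) (hq : 2 ≤ q) (S : SLP α)
    (p : List Bool) (i : Fin S.n) (jk : Fin S.n × Fin S.n)
    (hp : S.nodeVar p = some i) (hr : S.rule i = Sum.inr jk)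
    (s f : ℕ)
    (hsf : Finset.Icc s f =
      SLP.isuf (S.offset p + 1) (S.offset p + (S.val jk.1).length) (q - 1) ∪
      SLP.ipre (S.offset p + (S.val jk.1).length + 1)
        (S.offset p + (S.val i).length) (q - 1))
    (u : ℕ) (hu1 : 1 ≤ u) (hu2 : u + q - 1 ≤ S.text.length) :
    S.Stabs p u (u + q - 1) ↔ Finset.Icc u (u + q - 1) ⊆ Finset.Icc s f :=
  stmt1_general q hq S p i jk hp hr s f hsf u
end
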